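/- arXiv:2302.12062 — 4 statements merged into one kernel-verified Lean document; each statement's English description precedes it below -/
import Mathlib

section
/- In K[[X]], the two definitions of the quantum dilogarithm agree: ∑_{n≥0} q^{n/2} Xⁿ/((1−q)(1−q²)⋯(1−qⁿ)) = exp(∑_{n≥1} Xⁿ/(n·(q^{−n/2} − q^{n/2}))), where exp denotes the formal exponential of a power series with zero constant term. -/
noncomputable section

/-- `K = ℚ(q^{1/2})`, the field of rational functions over `ℚ` in the variable `q^{1/2}`. -/
abbrev K : Type := RatFunc ℚ

/-- The generator `q^{1/2}` of `K`. -/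
def sqrtq : K := RatFunc.X

/-- `q = (q^{1/2})²`. -/
def qvar : K := sqrtq ^ 2

/-- The quantum dilogarithm
`Φ(X) = ∑_{n≥0} q^{n/2}·Xⁿ/((1−q)(1−q²)⋯(1−qⁿ))` in `K[[X]]`. -/
def quantumDilog : PowerSeries K :=
  PowerSeries.mk fun n =>
    sqrtq ^ n * (∏ i ∈ Finset.range n, (1 - qvar ^ (i + 1)))⁻¹

/-- The formal exponential of a power series with zero constant term:
`exp(f) = ∑_{n≥0} fⁿ/n!` (for `f` with zero constant term, the coefficient of `X^d`
only involves `fⁿ` for `n ≤ d`). -/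
def formalExp (f : PowerSeries K) : PowerSeries K :=
  PowerSeries.mk fun d =>
    ∑ n ∈ Finset.range (d + 1), ((n.factorial : K))⁻¹ * PowerSeries.coeff d (f ^ n)

/-- The argument of the exponential: `∑_{n≥1} Xⁿ/(n·(q^{−n/2} − q^{n/2}))`. -/
def dilogExpArg : PowerSeries K :=
  PowerSeries.mk fun n =>
    if n = 0 then 0 else ((n : K) * ((sqrtq ^ n)⁻¹ - sqrtq ^ n))⁻¹

open PowerSeries Finset

lemma sqrtq_ne_zero : sqrtq ≠ 0 := RatFunc.X_ne_zero

lemma sqrtq_pow_ne_one {n : ℕ} (hn : n ≠ 0) : sqrtq ^ n ≠ 1 := by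
  intro h
  have h1 : (Polynomial.X : Polynomial ℚ) ^ n = 1 := by
    apply RatFunc.algebraMap_injective ℚ
    rw [map_pow, map_one, RatFunc.algebraMap_X]
    exact h
  have := congrArg Polynomial.natDegree h1
  simp [Polynomial.natDegree_X_pow] at this
  exact hn this

lemma qvar_pow_ne_one {n : ℕ} (hn : n ≠ 0) : qvar ^ n ≠ 1 := by
  rw [qvar, ← pow_mul]
  exact sqrtq_pow_ne_one (by omega)

lemma one_sub_qvar_pow_ne_zero {n : ℕ} (hn : n ≠ 0) : 1 - qvar ^ n ≠ 0 := by
  intro h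
  exact qvar_pow_ne_one hn (by linear_combination -h)

instance : CharZero K :=
  charZero_of_injective_algebraMap (algebraMap ℚ K).injective

lemma natCast_ne_zero' {n : ℕ} (hn : n ≠ 0) : (n : K) ≠ 0 := Nat.cast_ne_zero.mpr hn

/-- triangle sum reindexing -/
lemma tri_sum {M : Type*} [AddCommMonoid M] (N : ℕ) (g : ℕ → ℕ → M) :
    ∑ n ∈ range N, ∑ k ∈ range (n+1), g k (n-k)
      = ∑ i ∈ range N, ∑ j ∈ range (N-i), g i j := by
  induction N with
  | zero => simp
  | succ N ih =>
    have h1 : ∀ i ∈ range N, ∑ j ∈ range (N+1-i), g i j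
        = (∑ j ∈ range (N-i), g i j) + g i (N-i) := by
      intro i hi
      rw [mem_range] at hi
      rw [show N+1-i = (N-i)+1 by omega, Finset.sum_range_succ]
    have hR : ∑ i ∈ range (N+1), ∑ j ∈ range (N+1-i), g i j
        = (∑ i ∈ range N, ∑ j ∈ range (N-i), g i j) + ∑ k ∈ range (N+1), g k (N-k) := by
      rw [Finset.sum_range_succ, Finset.sum_congr rfl h1, Finset.sum_add_distrib,
        Finset.sum_range_succ (fun k => g k (N-k)), show N+1-N = 1 by omega,
        Finset.sum_range_one, Nat.sub_self]
      abel
    rw [Finset.sum_range_succ, ih, hR]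

lemma coeff_pow_eq_zero {f : PowerSeries K} (hf : PowerSeries.constantCoeff f = 0)
    {n d : ℕ} (h : d < n) : PowerSeries.coeff d (f ^ n) = 0 := by
  have : (PowerSeries.X : PowerSeries K) ^ n ∣ f ^ n :=
    pow_dvd_pow_of_dvd (PowerSeries.X_dvd_iff.mpr hf) n
  exact (PowerSeries.X_pow_dvd_iff.mp this) d h

lemma coeff_mul_pow_eq_zero {f g : PowerSeries K} (hf : PowerSeries.constantCoeff f = 0)
    (hg : PowerSeries.constantCoeff g = 0) {i j d : ℕ} (h : d < i + j) :
    PowerSeries.coeff d (f ^ i * g ^ j) = 0 := by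
  have : (PowerSeries.X : PowerSeries K) ^ (i+j) ∣ f ^ i * g ^ j := by
    rw [pow_add]
    exact mul_dvd_mul (pow_dvd_pow_of_dvd (PowerSeries.X_dvd_iff.mpr hf) i)
      (pow_dvd_pow_of_dvd (PowerSeries.X_dvd_iff.mpr hg) j)
  exact (PowerSeries.X_pow_dvd_iff.mp this) d h

lemma coeff_formalExp (f : PowerSeries K) (d : ℕ) :
    PowerSeries.coeff d (formalExp f)
      = ∑ n ∈ Finset.range (d + 1), ((n.factorial : K))⁻¹ * PowerSeries.coeff d (f ^ n) := by
  simp [formalExp]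

lemma constantCoeff_formalExp (f : PowerSeries K) :
    PowerSeries.coeff 0 (formalExp f) = 1 := by
  simp [coeff_formalExp]

lemma formalExp_rescale (a : K) (f : PowerSeries K) :
    PowerSeries.rescale a (formalExp f) = formalExp (PowerSeries.rescale a f) := by
  ext d
  rw [PowerSeries.coeff_rescale, coeff_formalExp, coeff_formalExp, Finset.mul_sum]
  refine Finset.sum_congr rfl fun n _ => ?_
  rw [← map_pow, PowerSeries.coeff_rescale]
  ring

lemma factorial_inv_choose {n k : ℕ} (hk : k ≤ n) :
    ((n.factorial : K))⁻¹ * (n.choose k : K)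
      = ((k.factorial : K))⁻¹ * (((n-k).factorial : K))⁻¹ := by
  have h := Nat.choose_mul_factorial_mul_factorial hk
  have hc : (n.choose k : K) * (k.factorial : K) * ((n-k).factorial : K) = (n.factorial : K) := by
    exact_mod_cast congrArg (Nat.cast : ℕ → K) h
  have h1 : (k.factorial : K) ≠ 0 := natCast_ne_zero' k.factorial_ne_zero
  have h2 : (((n-k).factorial : ℕ) : K) ≠ 0 := natCast_ne_zero' (n-k).factorial_ne_zero
  have h3 : (n.factorial : K) ≠ 0 := natCast_ne_zero' n.factorial_ne_zero
  field_simp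
  linear_combination hc

lemma formalExp_add (f g : PowerSeries K) (hf : PowerSeries.constantCoeff f = 0)
    (hg : PowerSeries.constantCoeff g = 0) :
    formalExp (f + g) = formalExp f * formalExp g := by
  ext d
  set T : ℕ → ℕ → K := fun i j =>
    ((i.factorial : K))⁻¹ * ((j.factorial : K))⁻¹ * PowerSeries.coeff d (f ^ i * g ^ j) with hT
  have hTzero : ∀ i j, d < i + j → T i j = 0 := by
    intro i j h
    simp [hT, coeff_mul_pow_eq_zero hf hg h]
  -- LHS
  have hL : PowerSeries.coeff d (formalExp (f + g))
      = ∑ n ∈ Finset.range (d+1), ∑ k ∈ Finset.range (n+1), T k (n-k) := by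
    rw [coeff_formalExp]
    refine Finset.sum_congr rfl fun n _ => ?_
    rw [add_pow, map_sum, Finset.mul_sum]
    refine Finset.sum_congr rfl fun k hk => ?_
    rw [Finset.mem_range] at hk
    have hsm : (f ^ k * g ^ (n-k) * ((n.choose k : ℕ) : PowerSeries K))
        = (n.choose k) • (f ^ k * g ^ (n-k)) := by
      rw [nsmul_eq_mul, mul_comm]
    rw [hsm, map_nsmul, nsmul_eq_mul, hT]
    simp only
    have h := factorial_inv_choose (show k ≤ n by omega)
    linear_combination (PowerSeries.coeff d (f ^ k * g ^ (n-k))) * h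
  have hext : ∀ i ∈ Finset.range (d+1),
      ∑ j ∈ Finset.range (d+1-i), T i j = ∑ j ∈ Finset.range (d+1), T i j := by
    intro i hi
    apply Finset.sum_subset (Finset.range_subset_range.mpr (by omega))
    intro j hj hj'
    rw [Finset.mem_range] at hj hj'
    exact hTzero i j (by omega)
  have hF : ∀ p ∈ Finset.HasAntidiagonal.antidiagonal d, PowerSeries.coeff p.1 (formalExp f)
      = ∑ i ∈ Finset.range (d+1), ((i.factorial : K))⁻¹ * PowerSeries.coeff p.1 (f ^ i) := by
    intro p hp
    have h1 : p.1 ≤ d := Finset.HasAntidiagonal.antidiagonal.fst_le hp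
    rw [coeff_formalExp]
    apply Finset.sum_subset (Finset.range_subset_range.mpr (by omega))
    intro i hi hi'
    rw [Finset.mem_range] at hi hi'
    rw [coeff_pow_eq_zero hf (show p.1 < i by omega), mul_zero]
  have hG : ∀ p ∈ Finset.HasAntidiagonal.antidiagonal d, PowerSeries.coeff p.2 (formalExp g)
      = ∑ j ∈ Finset.range (d+1), ((j.factorial : K))⁻¹ * PowerSeries.coeff p.2 (g ^ j) := by
    intro p hp
    have h2 : p.2 ≤ d := Finset.HasAntidiagonal.antidiagonal.snd_le hp
    rw [coeff_formalExp]
    apply Finset.sum_subset (Finset.range_subset_range.mpr (by omega))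
    intro j hj hj'
    rw [Finset.mem_range] at hj hj'
    rw [coeff_pow_eq_zero hg (show p.2 < j by omega), mul_zero]
  have hR : PowerSeries.coeff d (formalExp f * formalExp g)
      = ∑ i ∈ Finset.range (d+1), ∑ j ∈ Finset.range (d+1), T i j := by
    rw [PowerSeries.coeff_mul,
      Finset.sum_congr rfl (fun p hp => by rw [hF p hp, hG p hp, Finset.sum_mul_sum])]
    rw [Finset.sum_comm]
    refine Finset.sum_congr rfl fun i _ => ?_
    rw [Finset.sum_comm]
    refine Finset.sum_congr rfl fun j _ => ?_
    rw [hT]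
    simp only
    rw [PowerSeries.coeff_mul, Finset.mul_sum]
    refine Finset.sum_congr rfl fun p _ => ?_
    ring
  rw [hL, tri_sum, Finset.sum_congr rfl hext, hR]

open PowerSeries in
lemma formalExp_ode (f : PowerSeries K) (hf : PowerSeries.constantCoeff f = 0) :
    d⁄dX K (formalExp f) = d⁄dX K f * formalExp f := by
  ext d
  -- LHS
  have hL : PowerSeries.coeff d (d⁄dX K (formalExp f))
      = ∑ n ∈ Finset.range (d+1),
          (((n+1).factorial : K))⁻¹ * (PowerSeries.coeff (d+1) (f ^ (n+1)) * (d+1)) := by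
    rw [PowerSeries.coeff_derivative, coeff_formalExp, Finset.sum_mul,
      Finset.sum_range_succ' (fun n => ((n.factorial : K))⁻¹ * PowerSeries.coeff (d+1) (f ^ n) * ((d:K)+1))]
    simp [PowerSeries.coeff_one, mul_assoc]
  -- RHS
  have hext : ∀ p ∈ Finset.HasAntidiagonal.antidiagonal d, PowerSeries.coeff p.2 (formalExp f)
      = ∑ n ∈ Finset.range (d+1), ((n.factorial : K))⁻¹ * PowerSeries.coeff p.2 (f ^ n) := by
    intro p hp
    have h2 : p.2 ≤ d := Finset.HasAntidiagonal.antidiagonal.snd_le hp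
    rw [coeff_formalExp]
    apply Finset.sum_subset (Finset.range_subset_range.mpr (by omega))
    intro j hj hj'
    rw [Finset.mem_range] at hj hj'
    rw [coeff_pow_eq_zero hf (show p.2 < j by omega), mul_zero]
  have hpow : ∀ n : ℕ, PowerSeries.coeff d (d⁄dX K f * f ^ n)
      = ((n:K)+1)⁻¹ * (PowerSeries.coeff (d+1) (f ^ (n+1)) * ((d:K)+1)) := by
    intro n
    have hd : d⁄dX K (f ^ (n+1)) = (n+1) • f ^ n • d⁄dX K f := by
      have h := Derivation.leibniz_pow (d⁄dX K) f (n+1)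
      rwa [Nat.add_sub_cancel] at h
    have this1 := congrArg (PowerSeries.coeff d) hd
    rw [PowerSeries.coeff_derivative, map_nsmul, nsmul_eq_mul, smul_eq_mul] at this1
    have hne : ((n:K)+1) ≠ 0 := by
      exact_mod_cast natCast_ne_zero' (Nat.succ_ne_zero n)
    rw [mul_comm (d⁄dX K f) (f ^ n)]
    field_simp
    push_cast at this1
    linear_combination (-1 : K) * this1
  have hR : PowerSeries.coeff d (d⁄dX K f * formalExp f)
      = ∑ n ∈ Finset.range (d+1),
          ((n.factorial : K))⁻¹ * PowerSeries.coeff d (d⁄dX K f * f ^ n) := by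
    rw [PowerSeries.coeff_mul]
    have h1 : ∀ p ∈ Finset.HasAntidiagonal.antidiagonal d,
        PowerSeries.coeff p.1 (d⁄dX K f) * PowerSeries.coeff p.2 (formalExp f)
        = ∑ n ∈ Finset.range (d+1), ((n.factorial : K))⁻¹
            * (PowerSeries.coeff p.1 (d⁄dX K f) * PowerSeries.coeff p.2 (f ^ n)) := by
      intro p hp
      rw [hext p hp, Finset.mul_sum]
      exact Finset.sum_congr rfl fun n _ => by ring
    rw [Finset.sum_congr rfl h1, Finset.sum_comm]
    refine Finset.sum_congr rfl fun n _ => ?_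
    rw [← Finset.mul_sum, ← PowerSeries.coeff_mul]
  rw [hL, hR]
  refine Finset.sum_congr rfl fun n _ => ?_
  rw [hpow n]
  have hfac : (((n+1).factorial : K))⁻¹ = ((n.factorial : K))⁻¹ * ((n:K)+1)⁻¹ := by
    rw [Nat.factorial_succ]
    push_cast
    rw [mul_inv]
    ring
  rw [hfac]
  ring

open PowerSeries in
lemma ode_unique (P F G : PowerSeries K) (hF : d⁄dX K F = P * F) (hG : d⁄dX K G = P * G)
    (h0 : PowerSeries.coeff 0 F = PowerSeries.coeff 0 G) : F = G := by
  ext d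
  induction d using Nat.strong_induction_on with
  | _ d ih =>
    match d with
    | 0 => exact h0
    | Nat.succ e =>
      have hFe := congrArg (PowerSeries.coeff e) hF
      have hGe := congrArg (PowerSeries.coeff e) hG
      rw [PowerSeries.coeff_derivative, PowerSeries.coeff_mul] at hFe hGe
      have hsum : ∑ p ∈ Finset.HasAntidiagonal.antidiagonal e,
          PowerSeries.coeff p.1 P * PowerSeries.coeff p.2 F
          = ∑ p ∈ Finset.HasAntidiagonal.antidiagonal e,
            PowerSeries.coeff p.1 P * PowerSeries.coeff p.2 G := by
        refine Finset.sum_congr rfl fun p hp => ?_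
        have : p.2 ≤ e := Finset.HasAntidiagonal.antidiagonal.snd_le hp
        rw [ih p.2 (by omega)]
      have heq : PowerSeries.coeff (e+1) F * ((e:K)+1)
          = PowerSeries.coeff (e+1) G * ((e:K)+1) := by
        rw [hFe, hGe, hsum]
      have hne : ((e:K)+1) ≠ 0 := by
        exact_mod_cast natCast_ne_zero' (Nat.succ_ne_zero e)
      exact mul_right_cancel₀ hne heq

def logOneSub (c : K) : PowerSeries K :=
  PowerSeries.mk fun n => if n = 0 then 0 else -(c^n) / n

lemma constantCoeff_logOneSub (c : K) : PowerSeries.constantCoeff (logOneSub c) = 0 := by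
  simp [logOneSub, ← PowerSeries.coeff_zero_eq_constantCoeff_apply]

open PowerSeries in
lemma coeff_deriv_logOneSub (c : K) (k : ℕ) :
    PowerSeries.coeff k (d⁄dX K (logOneSub c)) = -(c^(k+1)) := by
  rw [PowerSeries.coeff_derivative]
  simp only [logOneSub, PowerSeries.coeff_mk, Nat.succ_ne_zero, if_false]
  have hne : ((k:K)+1) ≠ 0 := by exact_mod_cast natCast_ne_zero' (Nat.succ_ne_zero k)
  push_cast
  field_simp

open PowerSeries in
lemma ode_oneSub (c : K) :
    d⁄dX K (1 - PowerSeries.C c * PowerSeries.X)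
      = d⁄dX K (logOneSub c) * (1 - PowerSeries.C c * PowerSeries.X) := by
  ext d
  rw [PowerSeries.coeff_derivative]
  rw [mul_sub, mul_one, map_sub, map_sub]
  rw [mul_left_comm, PowerSeries.coeff_C_mul, PowerSeries.coeff_C_mul]
  cases d with
  | zero =>
    rw [PowerSeries.coeff_zero_mul_X, coeff_deriv_logOneSub]
    simp
  | succ e =>
    rw [PowerSeries.coeff_succ_mul_X, coeff_deriv_logOneSub, coeff_deriv_logOneSub]
    simp only [PowerSeries.coeff_one, PowerSeries.coeff_X]
    have : e + 1 + 1 ≠ 0 := by omega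
    have h2 : ¬ (e + 1 + 1 = 1) := by omega
    simp [this, h2]
    ring

open PowerSeries in
lemma formalExp_logOneSub (c : K) :
    formalExp (logOneSub c) = 1 - PowerSeries.C c * PowerSeries.X := by
  apply ode_unique (d⁄dX K (logOneSub c))
  · exact formalExp_ode _ (constantCoeff_logOneSub c)
  · exact ode_oneSub c
  · rw [constantCoeff_formalExp]
    simp

lemma prod_ne_zero' (e : ℕ) : (∏ i ∈ Finset.range e, (1 - qvar ^ (i + 1))) ≠ 0 :=
  Finset.prod_ne_zero_iff.mpr fun i _ => one_sub_qvar_pow_ne_zero (Nat.succ_ne_zero i)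

lemma funEq_dilog :
    quantumDilog * (1 - PowerSeries.C sqrtq * PowerSeries.X)
      = PowerSeries.rescale qvar quantumDilog := by
  ext d
  rw [mul_sub, mul_one, map_sub, mul_left_comm, PowerSeries.coeff_C_mul,
    PowerSeries.coeff_rescale]
  cases d with
  | zero => simp [PowerSeries.coeff_zero_mul_X]
  | succ e =>
    rw [PowerSeries.coeff_succ_mul_X]
    simp only [quantumDilog, PowerSeries.coeff_mk]
    rw [Finset.prod_range_succ]
    have h1 : (∏ i ∈ Finset.range e, (1 - qvar ^ (i + 1))) ≠ 0 := prod_ne_zero' e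
    have h2 : 1 - qvar ^ (e+1) ≠ 0 := one_sub_qvar_pow_ne_zero (Nat.succ_ne_zero e)
    field_simp
    ring

lemma funEq_arg :
    PowerSeries.rescale qvar dilogExpArg = dilogExpArg + logOneSub sqrtq := by
  ext n
  rw [PowerSeries.coeff_rescale, map_add]
  simp only [dilogExpArg, logOneSub, PowerSeries.coeff_mk]
  cases n with
  | zero => simp
  | succ e =>
    simp only [Nat.succ_ne_zero, if_false]
    have hs : sqrtq ^ (e+1) ≠ 0 := pow_ne_zero _ sqrtq_ne_zero
    have hn : ((e+1 : ℕ) : K) ≠ 0 := natCast_ne_zero' (Nat.succ_ne_zero e)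
    have hq : qvar ^ (e+1) = (sqrtq ^ (e+1))^2 := by
      rw [qvar, ← pow_mul, ← pow_mul, Nat.mul_comm]
    set a : K := sqrtq ^ (e+1) with ha
    set m : K := ((e+1 : ℕ) : K) with hm
    have h1 : a⁻¹ - a = a⁻¹ * (1 - a^2) := by
      field_simp
    have h2 : 1 - a^2 ≠ 0 := by
      rw [← hq]
      exact one_sub_qvar_pow_ne_zero (Nat.succ_ne_zero e)
    have hC : (m * (a⁻¹ * (1 - a^2)))⁻¹ = a * m⁻¹ * (1 - a^2)⁻¹ := by
      rw [mul_inv, mul_inv, inv_inv]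
      ring
    rw [hq, h1, hC]
    field_simp
    ring

lemma constantCoeff_dilogExpArg : PowerSeries.constantCoeff dilogExpArg = 0 := by
  simp [dilogExpArg, ← PowerSeries.coeff_zero_eq_constantCoeff_apply]

open PowerSeries in
lemma funEq_unique (F G : PowerSeries K)
    (hF : F * (1 - PowerSeries.C sqrtq * PowerSeries.X) = PowerSeries.rescale qvar F)
    (hG : G * (1 - PowerSeries.C sqrtq * PowerSeries.X) = PowerSeries.rescale qvar G)
    (h0 : PowerSeries.coeff 0 F = PowerSeries.coeff 0 G) : F = G := by
  have key : ∀ H : PowerSeries K,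
      H * (1 - PowerSeries.C sqrtq * PowerSeries.X) = PowerSeries.rescale qvar H →
      ∀ e : ℕ, PowerSeries.coeff (e+1) H * (1 - qvar ^ (e+1))
        = sqrtq * PowerSeries.coeff e H := by
    intro H hH e
    have h := congrArg (PowerSeries.coeff (e+1)) hH
    rw [mul_sub, mul_one, map_sub, mul_left_comm, PowerSeries.coeff_C_mul,
      PowerSeries.coeff_succ_mul_X, PowerSeries.coeff_rescale] at h
    linear_combination h
  ext d
  induction d using Nat.strong_induction_on with
  | _ d ih =>
    match d with
    | 0 => exact h0
    | Nat.succ e =>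
      have hFe := key F hF e
      have hGe := key G hG e
      rw [ih e (by omega)] at hFe
      exact mul_right_cancel₀ (one_sub_qvar_pow_ne_zero (Nat.succ_ne_zero e)) (hFe.trans hGe.symm)


/-- In `K[[X]]`, the two definitions of the quantum dilogarithm agree:
`∑_{n≥0} q^{n/2}·Xⁿ/((1−q)⋯(1−qⁿ)) = exp(∑_{n≥1} Xⁿ/(n·(q^{−n/2} − q^{n/2})))`. -/
theorem quantumDilog_eq_formalExp : quantumDilog = formalExp dilogExpArg := by
  apply funEq_unique
  · exact funEq_dilog
  · rw [formalExp_rescale, funEq_arg,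
      formalExp_add _ _ constantCoeff_dilogExpArg (constantCoeff_logOneSub sqrtq),
      formalExp_logOneSub]
  · rw [constantCoeff_formalExp]
    simp [quantumDilog]
end
end

section
/- In the formal power series ring ℚ[[s,X]] in two variables with its standard topology, the family of power series ((1 − s^{2n+1}·X)^{−1})_{n≥0} is multipliable, and its product equals ∑_{n≥0} sⁿXⁿ/∏_{i=1}^{n}(1 − s^{2i}); i.e., under the substitution s = q^{1/2} the quantum dilogarithm Φ(X) equals the infinite product ∏_{n≥0}(1 − q^{n+1/2}X)^{−1}. -/
noncomputable section

/-- The standard topology on `ℚ[[s,X]]`: the product topology of the discrete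
topology on each coefficient. -/
instance : TopologicalSpace (MvPowerSeries (Fin 2) ℚ) :=
  @Pi.topologicalSpace ((Fin 2) →₀ ℕ) (fun _ => ℚ) (fun _ => ⊥)

/-- The variable `s` (playing the role of `q^{1/2}`) of `ℚ[[s,X]]`. -/
def sVar : MvPowerSeries (Fin 2) ℚ := MvPowerSeries.X 0

/-- The variable `X` of `ℚ[[s,X]]`. -/
def XVar : MvPowerSeries (Fin 2) ℚ := MvPowerSeries.X 1

namespace QDL

open MvPowerSeries Filter

abbrev Rq := MvPowerSeries (Fin 2) ℚ

/-- total degree of an exponent -/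
def deg (d : Fin 2 →₀ ℕ) : ℕ := d 0 + d 1

/-- "order at least k" -/
def OrdGe (k : ℕ) (p : Rq) : Prop :=
  ∀ d : Fin 2 →₀ ℕ, deg d < k → MvPowerSeries.coeff d p = 0

lemma OrdGe.mono {k l : ℕ} (h : l ≤ k) {p : Rq} (hp : OrdGe k p) : OrdGe l p :=
  fun d hd => hp d (lt_of_lt_of_le hd h)

lemma OrdGe.add {k : ℕ} {p q : Rq} (hp : OrdGe k p) (hq : OrdGe k q) : OrdGe k (p + q) := by
  intro d hd
  rw [map_add, hp d hd, hq d hd, add_zero]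

lemma OrdGe.mul_left {k : ℕ} {p : Rq} (hp : OrdGe k p) (q : Rq) : OrdGe k (q * p) := by
  classical
  intro d hd
  rw [MvPowerSeries.coeff_mul]
  refine Finset.sum_eq_zero fun x hx => ?_
  rw [Finset.HasAntidiagonal.mem_antidiagonal] at hx
  have hx2 : deg x.2 < k := by
    have : deg x.1 + deg x.2 = deg d := by
      simp only [deg, ← hx, Finsupp.add_apply]; ring
    omega
  rw [hp x.2 hx2, mul_zero]

lemma OrdGe.mul_right {k : ℕ} {p : Rq} (hp : OrdGe k p) (q : Rq) : OrdGe k (p * q) := by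
  rw [mul_comm]; exact hp.mul_left q

lemma ordGe_monomial (e : Fin 2 →₀ ℕ) (c : ℚ) : OrdGe (deg e) (monomial e c) := by
  intro d hd
  rw [coeff_monomial_ne (fun h => by subst h; exact lt_irrefl _ hd) c]

lemma sX_eq_monomial (a b : ℕ) :
    sVar ^ a * XVar ^ b =
      monomial (Finsupp.single 0 a + Finsupp.single 1 b) 1 := by
  rw [sVar, XVar, X_pow_eq, X_pow_eq, monomial_mul_monomial, one_mul]

lemma deg_single_add (a b : ℕ) : deg (Finsupp.single 0 a + Finsupp.single 1 b) = a + b := by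
  simp [deg, Finsupp.add_apply, Finsupp.single_apply]

lemma ordGe_sX_mul (a b : ℕ) (w : Rq) : OrdGe (a + b) (sVar ^ a * XVar ^ b * w) := by
  rw [sX_eq_monomial]
  exact ((deg_single_add a b) ▸ ordGe_monomial _ 1).mul_right w


open Filter in
lemma tendsto_coeff {α : Type} {l : Filter α} {F : α → Rq} {g : Rq}
    (h : ∀ d : Fin 2 →₀ ℕ, ∀ᶠ x in l, MvPowerSeries.coeff d (F x) = MvPowerSeries.coeff d g) :
    Tendsto F l (nhds g) := by
  letI : TopologicalSpace ℚ := ⊥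
  haveI : DiscreteTopology ℚ := ⟨rfl⟩
  apply tendsto_pi_nhds.mpr
  intro d
  rw [nhds_discrete]
  exact tendsto_pure.mpr (h d)

instance : T2Space Rq := by
  letI : TopologicalSpace ℚ := ⊥
  haveI : DiscreteTopology ℚ := ⟨rfl⟩
  exact Pi.t2Space

instance : ContinuousAdd Rq := by
  letI : TopologicalSpace ℚ := ⊥
  haveI : DiscreteTopology ℚ := ⟨rfl⟩
  haveI : IsTopologicalRing ℚ := DiscreteTopology.topologicalRing
  exact ⟨by
    apply continuous_pi; intro d
    show Continuous fun p : Rq × Rq => p.1 d + p.2 d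
    exact ((continuous_apply d).comp continuous_fst).add
      ((continuous_apply d).comp continuous_snd)⟩

instance : ContinuousNeg Rq := by
  letI : TopologicalSpace ℚ := ⊥
  haveI : DiscreteTopology ℚ := ⟨rfl⟩
  haveI : IsTopologicalRing ℚ := DiscreteTopology.topologicalRing
  exact ⟨by
    apply continuous_pi; intro d
    show Continuous fun p : Rq => -(p d)
    exact (continuous_apply d).neg⟩

instance : ContinuousMul Rq := by
  letI : TopologicalSpace ℚ := ⊥
  haveI : DiscreteTopology ℚ := ⟨rfl⟩
  haveI : IsTopologicalRing ℚ := DiscreteTopology.topologicalRing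
  exact ⟨by
    apply continuous_pi; intro d
    classical
    have : (fun p : Rq × Rq => (p.1 * p.2) d)
        = fun p : Rq × Rq => ∑ x ∈ Finset.HasAntidiagonal.antidiagonal d, p.1 x.1 * p.2 x.2 := by
      funext p
      show MvPowerSeries.coeff d (p.1 * p.2) = _
      rw [MvPowerSeries.coeff_mul]
      rfl
    rw [this]
    apply continuous_finset_sum
    intro x _
    exact ((continuous_apply x.1).comp continuous_fst).mul
      ((continuous_apply x.2).comp continuous_snd)⟩

instance : IsTopologicalSemiring Rq := ⟨⟩
instance : IsTopologicalRing Rq := ⟨⟩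


def u (n : ℕ) : Rq := (∏ i ∈ Finset.range n, (1 - sVar ^ (2 * (i + 1))))⁻¹

def term (N n : ℕ) : Rq := sVar ^ ((2 * N + 1) * n) * XVar ^ n * u n

def G (N : ℕ) : Rq := fun d => ∑ n ∈ Finset.range (deg d + 1), MvPowerSeries.coeff d (term N n)

lemma coeff_G (N : ℕ) (d : Fin 2 →₀ ℕ) :
    MvPowerSeries.coeff d (G N) = ∑ n ∈ Finset.range (deg d + 1),
      MvPowerSeries.coeff d (term N n) := rfl

lemma ordGe_term (N n : ℕ) : OrdGe ((2 * N + 1) * n + n) (term N n) := ordGe_sX_mul _ _ _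

lemma coeff_term_eq_zero {N n : ℕ} {d : Fin 2 →₀ ℕ} (h : deg d < n) :
    MvPowerSeries.coeff d (term N n) = 0 :=
  ordGe_term N n d (lt_of_lt_of_le h (Nat.le_add_left n _))

open Filter in
lemma hasSum_term (N : ℕ) : HasSum (term N) (G N) := by
  apply tendsto_coeff
  intro d
  apply Filter.eventually_atTop.mpr
  refine ⟨Finset.range (deg d + 1), fun s hs => ?_⟩
  have h1 : MvPowerSeries.coeff d (∑ n ∈ s, term N n)
      = ∑ n ∈ s, MvPowerSeries.coeff d (term N n) := map_sum _ _ _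
  rw [h1, coeff_G]
  refine (Finset.sum_subset hs fun n _ hn => ?_).symm
  exact coeff_term_eq_zero (by simp only [Finset.mem_range, not_lt] at hn; omega)

lemma constCoeff_one_sub_sX (a b : ℕ) (h : 1 ≤ a + b) :
    MvPowerSeries.constantCoeff (1 - sVar ^ a * XVar ^ b) = 1 := by
  have h2 := ordGe_sX_mul a b 1
  have h3 := h2 0 (by simp only [deg, Finsupp.coe_zero, Pi.zero_apply]; omega)
  rw [mul_one] at h3
  rw [map_sub, map_one, ← MvPowerSeries.coeff_zero_eq_constantCoeff_apply, h3, sub_zero]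

lemma constCoeff_one_sub_s (k : ℕ) (h : 1 ≤ k) :
    MvPowerSeries.constantCoeff (1 - sVar ^ k) = 1 := by
  have := constCoeff_one_sub_sX k 0 (by omega)
  simpa using this

lemma u_succ (n : ℕ) : (1 - sVar ^ (2 * (n + 1))) * u (n + 1) = u n := by
  unfold u
  rw [Finset.prod_range_succ, MvPowerSeries.mul_inv_rev, ← mul_assoc,
    MvPowerSeries.mul_inv_cancel _ (by rw [constCoeff_one_sub_s _ (by omega)]; norm_num),
    one_mul]

lemma term_zero (N : ℕ) : term N 0 = 1 := by
  simp [term, u]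

lemma term_succ_sub (N n : ℕ) :
    term N (n + 1) - term (N + 1) (n + 1) = sVar ^ (2 * N + 1) * XVar * term N n := by
  have h := u_succ (n := n)
  unfold term
  have e1 : (2 * (N + 1) + 1) * (n + 1) = (2 * N + 1) * (n + 1) + 2 * (n + 1) := by ring
  have e2 : (2 * N + 1) * (n + 1) = (2 * N + 1) + (2 * N + 1) * n := by ring
  rw [e1, e2, pow_add, pow_add, pow_succ]
  linear_combination (sVar ^ (2 * N + 1) * sVar ^ ((2 * N + 1) * n) * (XVar ^ n * XVar)) * h

lemma G_succ (N : ℕ) : G (N + 1) = (1 - sVar ^ (2 * N + 1) * XVar) * G N := by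
  have h1 := hasSum_term N
  have h2 := hasSum_term (N + 1)
  have h3 : HasSum (fun n => term N n - term (N + 1) n) (G N - G (N + 1)) := h1.sub h2
  have h4 : HasSum (fun n => term N (n + 1) - term (N + 1) (n + 1)) (G N - G (N + 1)) := by
    refine (hasSum_nat_add_iff (f := fun n => term N n - term (N + 1) n) 1).mpr ?_
    simpa [term_zero] using h3
  have h5 : HasSum (fun n => sVar ^ (2 * N + 1) * XVar * term N n)
      (G N - G (N + 1)) := by
    have : (fun n => term N (n + 1) - term (N + 1) (n + 1))
        = fun n => sVar ^ (2 * N + 1) * XVar * term N n := funext fun n => term_succ_sub N n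
    rwa [this] at h4
  have h6 : HasSum (fun n => sVar ^ (2 * N + 1) * XVar * term N n)
      (sVar ^ (2 * N + 1) * XVar * G N) := by
    have := h1.mul_left (sVar ^ (2 * N + 1) * XVar)
    exact this
  have h7 := h5.unique h6
  rw [sub_mul, one_mul]
  rw [← h7]
  ring

lemma constCoeff_factor (n : ℕ) :
    MvPowerSeries.constantCoeff (1 - sVar ^ (2 * n + 1) * XVar) = 1 := by
  have := constCoeff_one_sub_sX (2 * n + 1) 1 (by omega)
  simpa using this

lemma prod_mul_G0 (N : ℕ) :
    (∏ n ∈ Finset.range N, (1 - sVar ^ (2 * n + 1) * XVar)) * G 0 = G N := by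
  induction N with
  | zero => simp
  | succ N ih => rw [Finset.prod_range_succ, G_succ, ← ih]; ring

lemma G0_eq (N : ℕ) :
    G 0 = (∏ n ∈ Finset.range N, (1 - sVar ^ (2 * n + 1) * XVar)⁻¹) * G N := by
  rw [← prod_mul_G0 N, ← mul_assoc, ← Finset.prod_mul_distrib]
  rw [Finset.prod_congr rfl fun n _ => MvPowerSeries.inv_mul_cancel _
    (by rw [constCoeff_factor]; norm_num)]
  rw [Finset.prod_const_one, one_mul]

lemma ordGe_G_sub_one (N : ℕ) : OrdGe (N + 1) (G N - 1) := by
  intro d hd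
  rw [map_sub, coeff_G]
  rw [Finset.sum_eq_single 0 (fun n _ hn => ?_) (by simp)]
  · rw [term_zero, sub_self]
  · refine ordGe_term N n d ?_
    have h1 : 1 ≤ n := Nat.one_le_iff_ne_zero.mpr hn
    have h2 : 2 * N + 1 ≤ (2 * N + 1) * n := Nat.le_mul_of_pos_right _ h1
    omega

lemma f_sub_one (n : ℕ) :
    (1 - sVar ^ (2 * n + 1) * XVar)⁻¹ - 1
      = (1 - sVar ^ (2 * n + 1) * XVar)⁻¹ * (sVar ^ (2 * n + 1) * XVar) := by
  have h := MvPowerSeries.inv_mul_cancel (1 - sVar ^ (2 * n + 1) * XVar)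
    (by rw [constCoeff_factor]; norm_num)
  linear_combination h

lemma ordGe_prod_sub_one {k : ℕ} (s : Finset ℕ) (f : ℕ → Rq)
    (hf : ∀ n ∈ s, OrdGe k (f n - 1)) : OrdGe k ((∏ n ∈ s, f n) - 1) := by
  classical
  induction s using Finset.cons_induction with
  | empty =>
    intro d _
    simp
  | cons a s ha ih =>
    rw [Finset.prod_cons]
    have h1 : OrdGe k (f a - 1) := hf a (Finset.mem_cons_self a s)
    have h2 : OrdGe k ((∏ n ∈ s, f n) - 1) :=
      ih fun n hn => hf n (Finset.mem_cons_of_mem hn)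
    have he : f a * (∏ n ∈ s, f n) - 1
        = (f a - 1) * (∏ n ∈ s, f n) + ((∏ n ∈ s, f n) - 1) := by ring
    rw [he]
    exact (h1.mul_right _).add h2

lemma ordGe_aux (n : ℕ) : OrdGe (2 * n + 2) (sVar ^ (2 * n + 1) * XVar) := by
  have h := ordGe_sX_mul (2 * n + 1) 1 1
  rw [mul_one, pow_one] at h
  exact h.mono (by omega)

open Filter in
lemma hasProd_G0 : HasProd (fun n => (1 - sVar ^ (2 * n + 1) * XVar)⁻¹) (G 0) := by
  apply tendsto_coeff
  intro d
  set N := deg d + 1 with hN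
  have hdlt : deg d < N := Nat.lt_succ_self _
  apply Filter.eventually_atTop.mpr
  refine ⟨Finset.range N, fun s hs => ?_⟩
  have hsub : Finset.range N ⊆ s := hs
  rw [← Finset.prod_sdiff hsub]
  have hr : OrdGe N ((∏ n ∈ s \ Finset.range N, (1 - sVar ^ (2 * n + 1) * XVar)⁻¹) - 1) := by
    refine ordGe_prod_sub_one _ _ fun n hn => ?_
    have hnN : N ≤ n := by
      simp only [Finset.mem_sdiff, Finset.mem_range, not_lt] at hn
      exact hn.2
    rw [f_sub_one n]
    exact ((ordGe_aux n).mono (by omega)).mul_left _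
  have key : ∀ r w : Rq, OrdGe N r →
      MvPowerSeries.coeff d (w * r + w) = MvPowerSeries.coeff d w := by
    intro r w hrw
    rw [map_add, (hrw.mul_left w) d hdlt, zero_add]
  have e1 : (∏ n ∈ s \ Finset.range N, (1 - sVar ^ (2 * n + 1) * XVar)⁻¹) *
        (∏ n ∈ Finset.range N, (1 - sVar ^ (2 * n + 1) * XVar)⁻¹)
      = (∏ n ∈ Finset.range N, (1 - sVar ^ (2 * n + 1) * XVar)⁻¹) *
          ((∏ n ∈ s \ Finset.range N, (1 - sVar ^ (2 * n + 1) * XVar)⁻¹) - 1)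
        + (∏ n ∈ Finset.range N, (1 - sVar ^ (2 * n + 1) * XVar)⁻¹) := by ring
  have e2 : G 0
      = (∏ n ∈ Finset.range N, (1 - sVar ^ (2 * n + 1) * XVar)⁻¹) * (G N - 1)
        + (∏ n ∈ Finset.range N, (1 - sVar ^ (2 * n + 1) * XVar)⁻¹) := by
    rw [G0_eq N]; ring
  rw [e1, e2, key _ _ hr, key _ _ ((ordGe_G_sub_one N).mono (Nat.le_succ N))]

lemma hasSum_stmt :
    HasSum (fun n : ℕ => sVar ^ n * XVar ^ n *
      (∏ i ∈ Finset.range n, (1 - sVar ^ (2 * (i + 1))))⁻¹) (G 0) := by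
  have h := hasSum_term 0
  have : (fun n : ℕ => sVar ^ n * XVar ^ n *
      (∏ i ∈ Finset.range n, (1 - sVar ^ (2 * (i + 1))))⁻¹) = term 0 := by
    funext n
    simp [term, u]
  rw [this]
  exact h

end QDL

/-- In `ℚ[[s,X]]` with its standard topology, the family `((1 − s^{2n+1}·X)^{−1})_{n≥0}`
is multipliable, and its product equals `∑_{n≥0} sⁿXⁿ/∏_{i=1}^{n}(1 − s^{2i})`;
i.e. under `s = q^{1/2}` the quantum dilogarithm `Φ(X)` equals
`∏_{n≥0}(1 − q^{n+1/2}X)^{−1}`. -/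
theorem quantumDilog_infinite_product :
    Multipliable (fun n : ℕ => (1 - sVar ^ (2 * n + 1) * XVar)⁻¹) ∧
    Summable (fun n : ℕ =>
      sVar ^ n * XVar ^ n * (∏ i ∈ Finset.range n, (1 - sVar ^ (2 * (i + 1))))⁻¹) ∧
    (∏' n : ℕ, (1 - sVar ^ (2 * n + 1) * XVar)⁻¹) =
      ∑' n : ℕ, sVar ^ n * XVar ^ n *
        (∏ i ∈ Finset.range n, (1 - sVar ^ (2 * (i + 1))))⁻¹ := by
  exact ⟨QDL.hasProd_G0.multipliable, QDL.hasSum_stmt.summable,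
    by rw [QDL.hasProd_G0.tprod_eq, QDL.hasSum_stmt.tsum_eq]⟩
end
end

section
/- For every real x with |x| < 1, the limit as q → 1 from below (q real, 0 < q < 1, with q^{1/2} = √q) of ∑_{n≥1} xⁿ·(q^{−1/2} − q^{1/2})/(n·(q^{−n/2} − q^{n/2})) equals the Euler dilogarithm Li₂(x) = ∑_{n≥1} xⁿ/n². In other words, (q^{−1/2} − q^{1/2})·log Φ(x) converges to Li₂(x) as q → 1⁻. -/
open Filter Topology

lemma qdl_key (s : ℝ) (hs0 : 0 < s) (hs1 : s < 1) (n : ℕ) :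
    (s⁻¹ - s) / (((n : ℝ) + 1) * ((s ^ (n + 1))⁻¹ - s ^ (n + 1))) =
      s ^ n / (((n : ℝ) + 1) * ∑ k ∈ Finset.range (n + 1), (s ^ 2) ^ k) := by
  have hs : s ≠ 0 := hs0.ne'
  have hS : (1 - s ^ 2) * ∑ k ∈ Finset.range (n + 1), (s ^ 2) ^ k = 1 - s ^ (2 * (n + 1)) := by
    have h := geom_sum_mul (s ^ 2) (n + 1)
    rw [← pow_mul] at h
    linarith [h]
  have hSpos : (0 : ℝ) < ∑ k ∈ Finset.range (n + 1), (s ^ 2) ^ k :=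
    Finset.sum_pos (fun k _ => pow_pos (pow_pos hs0 2) k) ⟨0, Finset.mem_range.2 n.succ_pos⟩
  have h2 : (1 : ℝ) - s ^ 2 ≠ 0 := by nlinarith
  have e1 : s⁻¹ - s = (1 - s ^ 2) / s := by
    field_simp
  have e2 : (s ^ (n + 1))⁻¹ - s ^ (n + 1) = (1 - s ^ (2 * (n + 1))) / s ^ (n + 1) := by
    rw [pow_mul]
    field_simp
    ring
  rw [e1, e2, ← hS]
  have hn1 : ((n : ℝ) + 1) ≠ 0 := by positivity
  field_simp
  ring

/-- For every real `x` with `|x| < 1`, the limit as `q → 1⁻` (with `q^{1/2} = √q`) of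
`∑_{n≥1} xⁿ·(q^{−1/2} − q^{1/2})/(n·(q^{−n/2} − q^{n/2}))`, which equals
`(q^{−1/2} − q^{1/2})·log Φ(x)`, is the Euler dilogarithm `Li₂(x) = ∑_{n≥1} xⁿ/n²`. -/
theorem quantumDilog_classical_limit (x : ℝ) (hx : |x| < 1) :
    Tendsto
      (fun q : ℝ => ∑' n : ℕ,
        x ^ (n + 1) * ((Real.sqrt q)⁻¹ - Real.sqrt q) /
          ((n + 1 : ℝ) * (((Real.sqrt q) ^ (n + 1))⁻¹ - (Real.sqrt q) ^ (n + 1))))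
      (nhdsWithin 1 (Set.Ioo (0 : ℝ) 1))
      (𝓝 (∑' n : ℕ, x ^ (n + 1) / ((n + 1 : ℝ) ^ 2))) := by
  apply tendsto_tsum_of_dominated_convergence (bound := fun n : ℕ => |x| ^ (n + 1))
  · exact (summable_geometric_of_lt_one (abs_nonneg x) hx).comp_injective (add_left_injective 1)
  · -- pointwise convergence
    intro n
    -- the continuous reformulation
    have hg : Tendsto
        (fun q : ℝ => x ^ (n + 1) * ((Real.sqrt q) ^ n /
          (((n : ℝ) + 1) * ∑ k ∈ Finset.range (n + 1), ((Real.sqrt q) ^ 2) ^ k)))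
        (nhdsWithin 1 (Set.Ioo (0 : ℝ) 1)) (𝓝 (x ^ (n + 1) / ((n + 1 : ℝ) ^ 2))) := by
      have hcont : ContinuousAt
          (fun q : ℝ => x ^ (n + 1) * ((Real.sqrt q) ^ n /
            (((n : ℝ) + 1) * ∑ k ∈ Finset.range (n + 1), ((Real.sqrt q) ^ 2) ^ k))) 1 := by
        apply ContinuousAt.mul continuousAt_const
        apply ContinuousAt.div
        · exact (Real.continuous_sqrt.continuousAt).pow n
        · exact ContinuousAt.mul continuousAt_const
            ((continuous_finset_sum _ fun k _ => ((Real.continuous_sqrt.pow 2).pow k)).continuousAt)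
        · have : Real.sqrt 1 = 1 := Real.sqrt_one
          simp [this]
          positivity
      have h := hcont.tendsto.mono_left (nhdsWithin_le_nhds (s := Set.Ioo (0:ℝ) 1))
      convert h using 2
      simp [Real.sqrt_one]
      rw [sq, div_eq_mul_inv, mul_inv]
    refine hg.congr' ?_
    filter_upwards [self_mem_nhdsWithin] with q hq
    obtain ⟨hq0, hq1⟩ := hq
    have hs0 : 0 < Real.sqrt q := Real.sqrt_pos.2 hq0
    have hs1 : Real.sqrt q < 1 := by
      rw [show (1:ℝ) = Real.sqrt 1 from Real.sqrt_one.symm]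
      exact Real.sqrt_lt_sqrt hq0.le hq1
    rw [mul_div_assoc, qdl_key _ hs0 hs1 n]
  · -- bound
    filter_upwards [self_mem_nhdsWithin] with q hq n
    obtain ⟨hq0, hq1⟩ := hq
    set s := Real.sqrt q
    have hs0 : 0 < s := Real.sqrt_pos.2 hq0
    have hs1 : s < 1 := by
      rw [show (1:ℝ) = Real.sqrt 1 from Real.sqrt_one.symm]
      exact Real.sqrt_lt_sqrt hq0.le hq1
    have hSpos : (0 : ℝ) < ∑ k ∈ Finset.range (n + 1), (s ^ 2) ^ k :=
      Finset.sum_pos (fun k _ => pow_pos (pow_pos hs0 2) k) ⟨0, Finset.mem_range.2 n.succ_pos⟩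
    have hS1 : (1 : ℝ) ≤ ∑ k ∈ Finset.range (n + 1), (s ^ 2) ^ k := by
      have := Finset.single_le_sum (f := fun k => (s ^ 2) ^ k)
        (fun k _ => le_of_lt (pow_pos (pow_pos hs0 2) k)) (Finset.mem_range.2 n.succ_pos)
      simpa using this
    rw [mul_div_assoc, qdl_key _ hs0 hs1 n]
    rw [norm_mul, norm_div]
    have h1 : ‖x ^ (n + 1)‖ = |x| ^ (n + 1) := by
      rw [Real.norm_eq_abs, abs_pow]
    rw [h1]
    have hsn : ‖s ^ n‖ ≤ 1 := by
      rw [Real.norm_eq_abs, abs_pow, abs_of_pos hs0]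
      exact pow_le_one₀ hs0.le hs1.le
    have hden : (1 : ℝ) ≤ ‖((n : ℝ) + 1) * ∑ k ∈ Finset.range (n + 1), (s ^ 2) ^ k‖ := by
      rw [Real.norm_eq_abs, abs_of_pos (by positivity)]
      nlinarith [Nat.cast_nonneg (α := ℝ) n]
    calc |x| ^ (n + 1) * (‖s ^ n‖ / ‖((n : ℝ) + 1) * ∑ k ∈ Finset.range (n + 1), (s ^ 2) ^ k‖)
        ≤ |x| ^ (n + 1) * (1 / 1) := by
          apply mul_le_mul_of_nonneg_left _ (by positivity)
          exact div_le_div₀ (by norm_num) hsn (by norm_num) hden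
      _ = |x| ^ (n + 1) := by ring
end

section
/- Let m ≥ 3 be an integer and σ(a,b) = (b, mb−a), with inverse σ^{−1}(a,b) = (ma−b, a). Then the set of pairs (a,b) of nonnegative integers satisfying a² + b² − mab = 1 is exactly {σ^k(0,1) : k ≥ 0} ∪ {σ^{−k}(1,0) : k ≥ 0} (in particular, all iterates σ^k(0,1) and σ^{−k}(1,0) for k ≥ 0 have nonnegative entries and satisfy this equation). -/
/-- The operator `σ(a,b) = (b, mb−a)` on `ℤ²`. -/
def sigmaOp (m : ℤ) : ℤ × ℤ → ℤ × ℤ := fun p => (p.2, m * p.2 - p.1)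

/-- The inverse operator `σ⁻¹(a,b) = (ma−b, a)` on `ℤ²`. -/
def sigmaOpInv (m : ℤ) : ℤ × ℤ → ℤ × ℤ := fun p => (m * p.1 - p.2, p.1)

lemma sigma_leftInv (m : ℤ) : Function.LeftInverse (sigmaOpInv m) (sigmaOp m) := by
  intro p
  simp only [sigmaOp, sigmaOpInv, Prod.ext_iff]
  simp only [and_true, true_and]; ring

lemma sigma_rightInv (m : ℤ) : Function.RightInverse (sigmaOpInv m) (sigmaOp m) := by
  intro p
  simp only [sigmaOp, sigmaOpInv, Prod.ext_iff]
  simp only [and_true, true_and]; ring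

lemma left_orbit (m : ℤ) (hm : 3 ≤ m) (k : ℕ) :
    0 ≤ ((sigmaOp m)^[k] (0, 1)).1 ∧
    ((sigmaOp m)^[k] (0, 1)).1 ≤ ((sigmaOp m)^[k] (0, 1)).2 ∧
    ((sigmaOp m)^[k] (0, 1)).1 ^ 2 + ((sigmaOp m)^[k] (0, 1)).2 ^ 2 -
      m * ((sigmaOp m)^[k] (0, 1)).1 * ((sigmaOp m)^[k] (0, 1)).2 = 1 := by
  induction k with
  | zero => norm_num
  | succ n ih =>
    obtain ⟨h1, h2, h3⟩ := ih
    rw [Function.iterate_succ_apply']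
    set p := (sigmaOp m)^[n] (0, 1)
    refine ⟨by simpa [sigmaOp] using le_trans h1 h2, ?_, ?_⟩
    · simp only [sigmaOp]
      nlinarith
    · simp only [sigmaOp]
      nlinarith [h3]

lemma right_orbit (m : ℤ) (hm : 3 ≤ m) (k : ℕ) :
    0 ≤ ((sigmaOpInv m)^[k] (1, 0)).2 ∧
    ((sigmaOpInv m)^[k] (1, 0)).2 ≤ ((sigmaOpInv m)^[k] (1, 0)).1 ∧
    ((sigmaOpInv m)^[k] (1, 0)).1 ^ 2 + ((sigmaOpInv m)^[k] (1, 0)).2 ^ 2 -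
      m * ((sigmaOpInv m)^[k] (1, 0)).1 * ((sigmaOpInv m)^[k] (1, 0)).2 = 1 := by
  induction k with
  | zero => norm_num
  | succ n ih =>
    obtain ⟨h1, h2, h3⟩ := ih
    rw [Function.iterate_succ_apply']
    set p := (sigmaOpInv m)^[n] (1, 0)
    refine ⟨by simpa [sigmaOpInv] using le_trans h1 h2, ?_, ?_⟩
    · simp only [sigmaOpInv]
      nlinarith
    · simp only [sigmaOpInv]
      nlinarith [h3]

lemma forward_aux (m : ℤ) (hm : 3 ≤ m) :
    ∀ n : ℕ, ∀ a b : ℤ, (a + b).toNat ≤ n → 0 ≤ a → 0 ≤ b →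
      a ^ 2 + b ^ 2 - m * a * b = 1 →
      (∃ k : ℕ, (a, b) = (sigmaOp m)^[k] (0, 1)) ∨
      (∃ k : ℕ, (a, b) = (sigmaOpInv m)^[k] (1, 0)) := by
  intro n
  induction n with
  | zero =>
    intro a b h ha hb hq
    have ha0 : a = 0 := by omega
    have hb0 : b = 0 := by omega
    subst ha0; subst hb0; norm_num at hq
  | succ n ih =>
    intro a b h ha hb hq
    rcases eq_or_lt_of_le ha with ha0 | hapos
    · -- a = 0
      obtain rfl : a = 0 := ha0.symm
      have hd : b ∣ 1 := ⟨b, by linarith [hq]⟩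
      have hb1 : b = 1 := Int.eq_one_of_dvd_one hb hd
      subst hb1
      exact Or.inl ⟨0, by simp⟩
    rcases eq_or_lt_of_le hb with hb0 | hbpos
    · -- b = 0
      obtain rfl : b = 0 := hb0.symm
      have hd : a ∣ 1 := ⟨a, by linarith [hq]⟩
      have ha1 : a = 1 := Int.eq_one_of_dvd_one ha hd
      subst ha1
      exact Or.inr ⟨0, by simp⟩
    have hne : a ≠ b := by
      intro hab
      subst hab
      nlinarith
    rcases lt_or_gt_of_ne hne with hab | hab
    · -- a < b : descend via σ⁻¹, child is (m*a - b, a)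
      have h1 : (m * a - b) * b = a ^ 2 - 1 := by linear_combination -hq
      have ha' : 0 ≤ m * a - b := by nlinarith
      have ha'a : m * a - b < a := by nlinarith
      have hq' : (m * a - b) ^ 2 + a ^ 2 - m * (m * a - b) * a = 1 := by
        linear_combination hq
      have hsum : (m * a - b + a).toNat ≤ n := by omega
      rcases ih (m * a - b) a hsum ha' ha hq' with ⟨k, hk⟩ | ⟨k, hk⟩
      · refine Or.inl ⟨k + 1, ?_⟩
        rw [Function.iterate_succ_apply', ← hk]
        simp only [sigmaOp, Prod.ext_iff]
        simp only [and_true, true_and]; ring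
      · rcases k with _ | j
        · exfalso
          simp only [Function.iterate_zero, id_eq, Prod.ext_iff] at hk
          omega
        · refine Or.inr ⟨j, ?_⟩
          rw [Function.iterate_succ_apply'] at hk
          have : sigmaOp m (m * a - b, a) = sigmaOp m (sigmaOpInv m ((sigmaOpInv m)^[j] (1, 0))) := by
            rw [hk]
          rw [sigma_rightInv m _] at this
          rw [← this]
          simp only [sigmaOp, Prod.ext_iff]
          simp only [and_true, true_and]; ring
    · -- b < a : descend via σ, child is (b, m*b - a)
      have h1 : (m * b - a) * a = b ^ 2 - 1 := by linear_combination -hq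
      have hb' : 0 ≤ m * b - a := by nlinarith
      have hb'b : m * b - a < b := by nlinarith
      have hq' : b ^ 2 + (m * b - a) ^ 2 - m * b * (m * b - a) = 1 := by
        linear_combination hq
      have hsum : (b + (m * b - a)).toNat ≤ n := by omega
      rcases ih b (m * b - a) hsum hb hb' hq' with ⟨k, hk⟩ | ⟨k, hk⟩
      · rcases k with _ | j
        · exfalso
          simp only [Function.iterate_zero, id_eq, Prod.ext_iff] at hk
          omega
        · refine Or.inl ⟨j, ?_⟩
          rw [Function.iterate_succ_apply'] at hk
          have : sigmaOpInv m (b, m * b - a) =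
              sigmaOpInv m (sigmaOp m ((sigmaOp m)^[j] (0, 1))) := by
            rw [hk]
          rw [sigma_leftInv m _] at this
          rw [← this]
          simp only [sigmaOpInv, Prod.ext_iff]
          simp only [and_true, true_and]; ring
      · refine Or.inr ⟨k + 1, ?_⟩
        rw [Function.iterate_succ_apply', ← hk]
        simp only [sigmaOpInv, Prod.ext_iff]
        simp only [and_true, true_and]; ring

/-- Let `m ≥ 3` be an integer and `σ(a,b) = (b, mb−a)`, with inverse
`σ⁻¹(a,b) = (ma−b, a)`.  The set of pairs `(a,b)` of nonnegative integers with
`a² + b² − m·a·b = 1` is exactly `{σᵏ(0,1) : k ≥ 0} ∪ {σ⁻ᵏ(1,0) : k ≥ 0}`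
(in particular all these iterates have nonnegative entries and satisfy the
equation). -/
theorem real_roots_are_sigma_orbit (m : ℤ) (hm : 3 ≤ m) :
    (Function.LeftInverse (sigmaOpInv m) (sigmaOp m) ∧
      Function.RightInverse (sigmaOpInv m) (sigmaOp m)) ∧
    {p : ℤ × ℤ | 0 ≤ p.1 ∧ 0 ≤ p.2 ∧ p.1 ^ 2 + p.2 ^ 2 - m * p.1 * p.2 = 1} =
      {p : ℤ × ℤ | ∃ k : ℕ, p = (sigmaOp m)^[k] (0, 1)} ∪
      {p : ℤ × ℤ | ∃ k : ℕ, p = (sigmaOpInv m)^[k] (1, 0)} := by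
  refine ⟨⟨sigma_leftInv m, sigma_rightInv m⟩, ?_⟩
  ext ⟨a, b⟩
  simp only [Set.mem_setOf_eq, Set.mem_union]
  constructor
  · rintro ⟨ha, hb, hq⟩
    exact forward_aux m hm (a + b).toNat a b le_rfl ha hb hq
  · rintro (⟨k, hk⟩ | ⟨k, hk⟩)
    · obtain ⟨h1, h2, h3⟩ := left_orbit m hm k
      rw [← hk] at h1 h2 h3
      exact ⟨h1, le_trans h1 h2, h3⟩
    · obtain ⟨h1, h2, h3⟩ := right_orbit m hm k
      rw [← hk] at h1 h2 h3
      exact ⟨le_trans h1 h2, h1, h3⟩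
end
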